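/- arXiv:2401.15339 — 8 statements merged into one kernel-verified Lean document; each statement's English description precedes it below -/
import Mathlib

section
/- Let (X,T) be a transitive topological dynamical system on a compact metric space with T not surjective. Then X \ T(X) consists of exactly one point x, and x is the unique transitive point of (X,T); moreover x is an isolated point of X. -/
/-- If `(X,T)` is a transitive system on a compact metric space and `T` is not
surjective, then `X \ T(X)` is a single point `x`, which is the unique transitive point of
`(X,T)` and is an isolated point of `X`. -/
theorem stmt4 {X : Type*} [MetricSpace X] [CompactSpace X]
    (T : X → X) (hT : Continuous T) (hnsurj : ¬ Function.Surjective T)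
    (htrans : ∃ y : X, Dense (Set.range fun n : ℕ => T^[n] y)) :
    ∃ x : X, (Set.range T)ᶜ = {x} ∧
      Dense (Set.range fun n : ℕ => T^[n] x) ∧
      (∀ y : X, Dense (Set.range fun n : ℕ => T^[n] y) → y = x) ∧
      IsOpen ({x} : Set X) := by
  obtain ⟨y, hy⟩ := htrans
  have hclosed : IsClosed (Set.range T) := (isCompact_range hT).isClosed
  have hO : IsOpen (Set.range T)ᶜ := hclosed.isOpen_compl
  -- key: any point outside the range of T equals the transitive point
  have key : ∀ (z : X), Dense (Set.range fun n : ℕ => T^[n] z) →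
      ∀ x ∈ (Set.range T)ᶜ, x = z := by
    intro z hz x hx
    have h1 : x ∈ (Set.range T)ᶜ ∩ closure (Set.range fun n : ℕ => T^[n] z) :=
      ⟨hx, hz x⟩
    have h2 : x ∈ closure ((Set.range T)ᶜ ∩ Set.range fun n : ℕ => T^[n] z) :=
      hO.inter_closure h1
    have h3 : ((Set.range T)ᶜ ∩ Set.range fun n : ℕ => T^[n] z) ⊆ {z} := by
      rintro w ⟨hw1, n, rfl⟩
      cases n with
      | zero => simp
      | succ m =>
        exact absurd ⟨T^[m] z, by simp [Function.iterate_succ_apply']⟩ hw1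
    have := closure_mono h3 h2
    rwa [closure_singleton, Set.mem_singleton_iff] at this
  obtain ⟨x0, hx0⟩ : ((Set.range T)ᶜ).Nonempty := by
    rw [Set.nonempty_compl]
    intro h
    exact hnsurj (Set.range_eq_univ.mp h)
  have hx0y : x0 = y := key y hy x0 hx0
  subst hx0y
  have heq : (Set.range T)ᶜ = {x0} := by
    apply Set.eq_singleton_iff_unique_mem.mpr
    exact ⟨hx0, fun w hw => key x0 hy w hw⟩
  refine ⟨x0, heq, hy, fun z hz => ?_, heq ▸ hO⟩
  exact (key z hz x0 hx0).symm
end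

section
/- If (X,T) is a totally transitive system on a compact metric space and T is surjective, then every transitive point of (X,T) is a totally transitive point, i.e., for every k ∈ ℕ, the set {T^{kn}x : n ≥ 0} is dense in X. -/
/-- If `(X,T)` is totally transitive on a compact metric space and `T` is
surjective, then every transitive point of `(X,T)` is a totally transitive point. -/
theorem stmt6 {X : Type*} [MetricSpace X] [CompactSpace X]
    (T : X → X) (hT : Continuous T) (hsurj : Function.Surjective T)
    (htt : ∀ k : ℕ, 0 < k → ∃ y : X, Dense (Set.range fun n : ℕ => T^[k * n] y))
    (x : X) (hx : Dense (Set.range fun n : ℕ => T^[n] x)) :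
    ∀ k : ℕ, 0 < k → Dense (Set.range fun n : ℕ => T^[k * n] x) := by
  intro k hk
  have hcont : ∀ m : ℕ, Continuous (T^[m]) := fun m => hT.iterate m
  have hsurjm : ∀ m : ℕ, Function.Surjective (T^[m]) := fun m => hsurj.iterate m
  -- the k pieces of the orbit closure
  set D : Fin k → Set X := fun i => closure (Set.range fun n : ℕ => T^[(i : ℕ) + k * n] x)
    with hD
  have hDclosed : ∀ i, IsClosed (D i) := fun i => isClosed_closure
  -- each piece is invariant under T^[k]
  have hinv : ∀ i, ∀ z ∈ D i, T^[k] z ∈ D i := by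
    intro i z hz
    have h1 : T^[k] z ∈ T^[k] '' D i := ⟨z, hz, rfl⟩
    have h2 : T^[k] '' D i ⊆
        closure (T^[k] '' Set.range fun n : ℕ => T^[(i : ℕ) + k * n] x) :=
      image_closure_subset_closure_image (hcont k)
    have h3 : (T^[k] '' Set.range fun n : ℕ => T^[(i : ℕ) + k * n] x) ⊆
        Set.range fun n : ℕ => T^[(i : ℕ) + k * n] x := by
      rintro _ ⟨_, ⟨n, rfl⟩, rfl⟩
      refine ⟨n + 1, ?_⟩
      show T^[(i : ℕ) + k * (n + 1)] x = T^[k] (T^[(i : ℕ) + k * n] x)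
      rw [show (i : ℕ) + k * (n + 1) = k + ((i : ℕ) + k * n) by ring,
        Function.iterate_add_apply]
    exact closure_mono h3 (h2 h1)
  -- the pieces cover X
  have hcover : ⋃ i, D i = Set.univ := by
    have hsub : (Set.range fun n : ℕ => T^[n] x) ⊆ ⋃ i, D i := by
      rintro _ ⟨n, rfl⟩
      refine Set.mem_iUnion.2 ⟨⟨n % k, Nat.mod_lt _ hk⟩, subset_closure ⟨n / k, ?_⟩⟩
      show T^[((⟨n % k, Nat.mod_lt _ hk⟩ : Fin k) : ℕ) + k * (n / k)] x = T^[n] x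
      congr 1
      simpa using Nat.mod_add_div n k
    have hclosed : IsClosed (⋃ i, D i) := isClosed_iUnion_of_finite hDclosed
    have : Dense (⋃ i, D i) := hx.mono hsub
    simpa [hclosed.closure_eq] using this.closure_eq
  -- Baire: some piece has nonempty interior
  have hbaire : Dense (⋃ i, interior (D i)) :=
    dense_iUnion_interior_of_closed hDclosed hcover
  have : Nonempty X := ⟨x⟩
  obtain ⟨z, hz⟩ := (hbaire.nonempty)
  obtain ⟨i, hzi⟩ := Set.mem_iUnion.1 hz
  -- a transitive point y of T^[k] enters the interior of D i
  obtain ⟨y, hy⟩ := htt k hk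
  obtain ⟨w, hwint, hwrange⟩ := hy.inter_open_nonempty (interior (D i)) isOpen_interior ⟨z, hzi⟩
  obtain ⟨n, rfl⟩ := hwrange
  have hyn : T^[k * n] y ∈ D i := interior_subset hwint
  -- the tail of y's orbit lies in D i
  have htail : ∀ m : ℕ, T^[k * (n + m)] y ∈ D i := by
    intro m
    induction m with
    | zero => simpa using hyn
    | succ m ih =>
      have : T^[k] (T^[k * (n + m)] y) ∈ D i := hinv i _ ih
      rwa [← Function.iterate_add_apply,
        show k + k * (n + m) = k * (n + (m + 1)) by ring] at this
  -- the tail is dense (using surjectivity)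
  have htaildense : Dense (Set.range fun m : ℕ => T^[k * (n + m)] y) := by
    have : DenseRange (T^[k * n] ∘ fun m : ℕ => T^[k * m] y) :=
      DenseRange.comp (hsurjm (k * n)).denseRange hy (hcont (k * n))
    have heq : (T^[k * n] ∘ fun m : ℕ => T^[k * m] y) =
        fun m : ℕ => T^[k * (n + m)] y := by
      funext m
      simp only [Function.comp_apply, ← Function.iterate_add_apply]
      congr 1
      ring
    rwa [heq] at this
  -- hence D i = univ
  have hDi : D i = Set.univ := by
    have hsub : (Set.range fun m : ℕ => T^[k * (n + m)] y) ⊆ D i := by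
      rintro _ ⟨m, rfl⟩; exact htail m
    have : Dense (D i) := htaildense.mono hsub
    simpa [(hDclosed i).closure_eq] using this.closure_eq
  -- push D i back to D 0 via T^[k - i], using surjectivity
  have hD0 : Set.univ ⊆ closure (Set.range fun n : ℕ => T^[k * n] x) := by
    intro p _
    obtain ⟨q, rfl⟩ := hsurjm (k - (i : ℕ)) p
    have hq : q ∈ D i := by rw [hDi]; trivial
    have h2 : T^[k - (i : ℕ)] '' D i ⊆
        closure (T^[k - (i : ℕ)] '' Set.range fun n : ℕ => T^[(i : ℕ) + k * n] x) :=
      image_closure_subset_closure_image (hcont _)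
    have h3 : (T^[k - (i : ℕ)] '' Set.range fun n : ℕ => T^[(i : ℕ) + k * n] x) ⊆
        Set.range fun n : ℕ => T^[k * n] x := by
      rintro _ ⟨_, ⟨m, rfl⟩, rfl⟩
      refine ⟨m + 1, ?_⟩
      rw [← Function.iterate_add_apply]
      show T^[k * (m + 1)] x = T^[k - (i : ℕ) + ((i : ℕ) + k * m)] x
      have := i.isLt
      rw [Nat.mul_succ]
      congr 1
      omega
    exact closure_mono h3 (h2 ⟨q, hq, rfl⟩)
  rw [dense_iff_closure_eq]
  exact Set.eq_univ_of_univ_subset hD0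
end

section
/- Let S ⊆ ℕ be syndetic with S ∪ (S−1) ∪ … ∪ (S−(k−1)) ⊇ ℕ, let h > k, and let S_i := S ∩ (h²ℕ + [ih, (i+1)h)) for 0 ≤ i ≤ h−1. Let (X,T) be a nontrivial totally transitive system, x a transitive point, and μ a T-invariant Borel probability measure on X. If X_i denotes the closure of {Tⁿx : n ∈ S_i}, then μ(X_i) ≥ 1/k for each i, and consequently there exist 0 ≤ i < j ≤ h−1 with X_i ∩ X_j ≠ ∅. -/
open MeasureTheory
open scoped ENNReal

/-!
For `l > 0` the closures `D r` of the progressions `{T^(l n + r) x : n}`, `r < l`, cover `X`, and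
each is mapped into itself by `T^l`. So the closure `D r` containing a point with dense `T^l`-orbit
is all of `X`, and every other `D r'` contains an iterate `T^s X`; by invariance `μ (D r') = 1`.
Syndeticity puts `T^(h² n + i h) x` in the closed set `⋃_{j<k} T^{-j} Xᵢ`, which therefore has full
measure, giving `k μ(Xᵢ) ≥ 1`. As `h > k`, the `h` sets `Xᵢ` cannot be pairwise disjoint.
-/

open Set Function

section Progression

variable {X : Type*} [TopologicalSpace X] {T : X → X} {x : X}

theorem mapsTo_iterate_closure_progression (hT : Continuous T) (l r s : ℕ) :
    MapsTo T^[s] (closure (range fun n => T^[l * n + r] x))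
      (closure (range fun n => T^[l * n + (r + s)] x)) := by
  refine MapsTo.closure ?_ (hT.iterate s)
  rintro _ ⟨n, rfl⟩
  exact ⟨n, by rw [← iterate_add_apply]; ring_nf⟩

theorem closure_progression_add_mul_subset (l r m : ℕ) :
    closure (range fun n => T^[l * n + (r + l * m)] x) ⊆
      closure (range fun n => T^[l * n + r] x) :=
  closure_mono <| by
    rintro _ ⟨n, rfl⟩
    exact ⟨n + m, by ring_nf⟩

theorem exists_mem_closure_progression (hx : Dense (range fun n => T^[n] x)) {l : ℕ}
    (hl : 0 < l) (y : X) : ∃ r < l, y ∈ closure (range fun n => T^[l * n + r] x) := by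
  have hsub : range (fun n => T^[n] x) ⊆ ⋃ r ∈ Iio l, range fun n => T^[l * n + r] x := by
    rintro _ ⟨n, rfl⟩
    exact mem_biUnion (Nat.mod_lt n hl)
      ⟨n / l, show T^[l * (n / l) + n % l] x = _ by rw [Nat.div_add_mod]⟩
  have hy := closure_mono hsub (hx.closure_eq ▸ mem_univ y)
  rw [(finite_Iio l).closure_biUnion] at hy
  simpa using hy

theorem closure_progression_eq_univ (hT : Continuous T) {l r : ℕ} {y : X}
    (hy : Dense (range fun n => T^[l * n] y))
    (hyr : y ∈ closure (range fun n => T^[l * n + r] x)) :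
    closure (range fun n => T^[l * n + r] x) = univ := by
  have hinv : MapsTo T^[l] (closure (range fun n => T^[l * n + r] x))
      (closure (range fun n => T^[l * n + r] x)) := by
    have hsub := closure_progression_add_mul_subset (T := T) (x := x) l r 1
    rw [mul_one] at hsub
    exact (mapsTo_iterate_closure_progression hT l r l).mono_right hsub
  have horbit : range (fun n => T^[l * n] y) ⊆ closure (range fun n => T^[l * n + r] x) :=
    range_subset_iff.2 fun n => by
      rw [iterate_mul]
      exact hinv.iterate n hyr
  exact eq_univ_of_univ_subset <| hy.closure_eq ▸ closure_minimal horbit isClosed_closure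

theorem exists_iterate_mem_closure_progression (hT : Continuous T)
    (hx : Dense (range fun n => T^[n] x)) {l : ℕ} (hl : 0 < l) {y : X}
    (hy : Dense (range fun n => T^[l * n] y)) (r : ℕ) :
    ∃ s, ∀ z, T^[s] z ∈ closure (range fun n => T^[l * n + r] x) := by
  obtain ⟨r₀, hr₀l, hyr₀⟩ := exists_mem_closure_progression hx hl y
  have hr₀ := closure_progression_eq_univ hT hy hyr₀
  refine ⟨l - r₀ + r, fun z => closure_progression_add_mul_subset l r 1 ?_⟩
  have hz := mapsTo_iterate_closure_progression hT l r₀ (l - r₀ + r) (hr₀ ▸ mem_univ z)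
  rwa [show r₀ + (l - r₀ + r) = r + l * 1 by omega] at hz

end Progression

section Measure

variable {X : Type*} [MeasurableSpace X] {T : X → X} {μ : Measure X}

theorem MeasureTheory.MeasurePreserving.measure_eq_one_of_forall_iterate_mem
    [IsProbabilityMeasure μ] (hμ : MeasurePreserving T μ μ) {K : Set X}
    (hK : NullMeasurableSet K μ) {s : ℕ} (hs : ∀ z, T^[s] z ∈ K) : μ K = 1 := by
  rw [← (hμ.iterate s).measure_preimage hK, (eq_univ_of_forall hs : T^[s] ⁻¹' K = univ),
    measure_univ]

theorem MeasureTheory.MeasurePreserving.measure_biUnion_preimage_iterate_le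
    (hμ : MeasurePreserving T μ μ) {A : Set X} (hA : NullMeasurableSet A μ) (k : ℕ) :
    μ (⋃ j ∈ Finset.range k, T^[j] ⁻¹' A) ≤ k * μ A :=
  calc μ (⋃ j ∈ Finset.range k, T^[j] ⁻¹' A) ≤ ∑ j ∈ Finset.range k, μ (T^[j] ⁻¹' A) :=
        measure_biUnion_finset_le _ _
    _ = k * μ A := by
        simp only [(hμ.iterate _).measure_preimage hA, Finset.sum_const, Finset.card_range,
          nsmul_eq_mul]

theorem measure_closure_progression_eq_one [TopologicalSpace X] [OpensMeasurableSpace X]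
    [IsProbabilityMeasure μ] (hT : Continuous T) (hμ : MeasurePreserving T μ μ) {x : X}
    (hx : Dense (range fun n => T^[n] x)) {l : ℕ} (hl : 0 < l) {y : X}
    (hy : Dense (range fun n => T^[l * n] y)) (r : ℕ) :
    μ (closure (range fun n => T^[l * n + r] x)) = 1 :=
  have ⟨_, hs⟩ := exists_iterate_mem_closure_progression hT hx hl hy r
  hμ.measure_eq_one_of_forall_iterate_mem isClosed_closure.nullMeasurableSet hs

theorem one_div_le_measure_of_forall_exists_iterate_mem [TopologicalSpace X]
    [OpensMeasurableSpace X] [IsProbabilityMeasure μ] (hT : Continuous T)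
    (hμ : MeasurePreserving T μ μ) {x : X} (hx : Dense (range fun n => T^[n] x)) {l : ℕ}
    (hl : 0 < l) {y : X} (hy : Dense (range fun n => T^[l * n] y)) {r k : ℕ} {A : Set X}
    (hA : IsClosed A) (hmem : ∀ n, ∃ j < k, T^[j + (l * n + r)] x ∈ A) :
    1 / (k : ℝ≥0∞) ≤ μ A := by
  have hU : IsClosed (⋃ j ∈ Finset.range k, T^[j] ⁻¹' A) :=
    isClosed_biUnion_finset fun j _ => hA.preimage (hT.iterate j)
  have hprog : range (fun n => T^[l * n + r] x) ⊆ ⋃ j ∈ Finset.range k, T^[j] ⁻¹' A := by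
    rintro _ ⟨n, rfl⟩
    obtain ⟨j, hjk, hj⟩ := hmem n
    exact mem_biUnion (Finset.mem_range.2 hjk) (by rwa [mem_preimage, ← iterate_add_apply])
  refine ENNReal.div_le_of_le_mul ?_
  calc 1 = μ (closure (range fun n => T^[l * n + r] x)) :=
        (measure_closure_progression_eq_one hT hμ hx hl hy r).symm
    _ ≤ μ (⋃ j ∈ Finset.range k, T^[j] ⁻¹' A) := measure_mono (closure_minimal hprog hU)
    _ ≤ k * μ A := hμ.measure_biUnion_preimage_iterate_le hA.nullMeasurableSet k
    _ = μ A * k := mul_comm _ _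

theorem exists_lt_inter_nonempty_of_one_div_le_measure [IsProbabilityMeasure μ]
    {A : ℕ → Set X} (hA : ∀ i, NullMeasurableSet (A i) μ) {k h : ℕ} (hkh : k < h)
    (hmeasure : ∀ i < h, 1 / (k : ℝ≥0∞) ≤ μ (A i)) :
    ∃ i j, i < j ∧ j < h ∧ (A i ∩ A j).Nonempty := by
  have hsum : μ univ < ∑ i ∈ Finset.range h, μ (A i) :=
    calc μ univ = 1 := measure_univ
      _ < h / k := by
        rw [ENNReal.lt_div_iff_mul_lt (by simp) (by simp), one_mul]
        exact_mod_cast hkh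
      _ = ∑ _i ∈ Finset.range h, 1 / (k : ℝ≥0∞) := by
        rw [Finset.sum_const, Finset.card_range, nsmul_eq_mul, mul_one_div]
      _ ≤ ∑ i ∈ Finset.range h, μ (A i) :=
        Finset.sum_le_sum fun i hi => hmeasure i (Finset.mem_range.1 hi)
  obtain ⟨i, hi, j, hj, hij, hne⟩ :=
    exists_nonempty_inter_of_measure_univ_lt_sum_measure μ (fun i _ => hA i) hsum
  rw [Finset.mem_range] at hi hj
  rcases hij.lt_or_gt with hlt | hlt
  · exact ⟨i, j, hlt, hj, hne⟩
  · exact ⟨j, i, hlt, hi, inter_comm (A i) (A j) ▸ hne⟩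

end Measure

theorem stmt7_general {X : Type*} [MetricSpace X]
    [MeasurableSpace X] [BorelSpace X]
    (T : X → X) (hT : Continuous T)
    (htt : ∀ l : ℕ, 0 < l → ∃ y : X, Dense (Set.range fun n : ℕ => T^[l * n] y))
    (x : X) (hx : Dense (Set.range fun n : ℕ => T^[n] x))
    (μ : Measure X) [IsProbabilityMeasure μ] (hμ : MeasurePreserving T μ μ)
    (S : Set ℕ) (k h : ℕ) (hkh : k < h)
    (hsynd : ∀ n : ℕ, ∃ j < k, n + j ∈ S)
    (Si : ℕ → Set ℕ)
    (hSi : ∀ i, Si i = S ∩ {m : ℕ | ∃ n r : ℕ, i * h ≤ r ∧ r < (i + 1) * h ∧ m = h ^ 2 * n + r})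
    (Xi : ℕ → Set X)
    (hXi : ∀ i, Xi i = closure {y : X | ∃ n ∈ Si i, y = T^[n] x}) :
    (∀ i ≤ h - 1, (1 : ℝ≥0∞) / k ≤ μ (Xi i)) ∧
    ∃ i j : ℕ, i < j ∧ j ≤ h - 1 ∧ (Xi i ∩ Xi j).Nonempty := by
  have hXi_closed (i : ℕ) : IsClosed (Xi i) := hXi i ▸ isClosed_closure
  obtain ⟨y, hy⟩ := htt (h ^ 2) (pow_pos (by omega) 2)
  have hXi_measure (i : ℕ) : 1 / (k : ℝ≥0∞) ≤ μ (Xi i) := by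
    refine one_div_le_measure_of_forall_exists_iterate_mem hT hμ hx (pow_pos (by omega) 2) hy
      (r := i * h) (hXi_closed i) fun n => ?_
    obtain ⟨j, hjk, hjS⟩ := hsynd (h ^ 2 * n + i * h)
    refine ⟨j, hjk, hXi i ▸ subset_closure ⟨h ^ 2 * n + i * h + j, ?_, by rw [add_comm j]⟩⟩
    rw [hSi]
    exact ⟨hjS, n, i * h + j, by omega, by rw [add_one_mul]; omega, by ring⟩
  refine ⟨fun i _ => hXi_measure i, ?_⟩
  obtain ⟨i, j, hij, hjh, hne⟩ := exists_lt_inter_nonempty_of_one_div_le_measure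
    (fun i => (hXi_closed i).nullMeasurableSet) hkh fun i _ => hXi_measure i
  exact ⟨i, j, hij, by omega, hne⟩

/-- Let `S ⊆ ℕ` be syndetic with `S ∪ (S−1) ∪ … ∪ (S−(k−1)) ⊇ ℕ`, `h > k`,
and `Sᵢ = S ∩ (h²ℕ + [ih,(i+1)h))`. For a nontrivial totally transitive system `(X,T)`,
a transitive point `x`, and a `T`-invariant Borel probability measure `μ`, the closures
`Xᵢ` of `{Tⁿx : n ∈ Sᵢ}` satisfy `μ(Xᵢ) ≥ 1/k`, and some two of them intersect. -/
theorem stmt7 {X : Type*} [MetricSpace X] [CompactSpace X] [Nontrivial X]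
    [MeasurableSpace X] [BorelSpace X]
    (T : X → X) (hT : Continuous T)
    (htt : ∀ l : ℕ, 0 < l → ∃ y : X, Dense (Set.range fun n : ℕ => T^[l * n] y))
    (x : X) (hx : Dense (Set.range fun n : ℕ => T^[n] x))
    (μ : Measure X) [IsProbabilityMeasure μ] (hμ : MeasurePreserving T μ μ)
    (S : Set ℕ) (k h : ℕ) (hk : 0 < k) (hkh : k < h)
    (hsynd : ∀ n : ℕ, ∃ j < k, n + j ∈ S)
    (Si : ℕ → Set ℕ)
    (hSi : ∀ i, Si i = S ∩ {m : ℕ | ∃ n r : ℕ, i * h ≤ r ∧ r < (i + 1) * h ∧ m = h ^ 2 * n + r})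
    (Xi : ℕ → Set X)
    (hXi : ∀ i, Xi i = closure {y : X | ∃ n ∈ Si i, y = T^[n] x}) :
    (∀ i ≤ h - 1, (1 : ℝ≥0∞) / k ≤ μ (Xi i)) ∧
    ∃ i j : ℕ, i < j ∧ j ≤ h - 1 ∧ (Xi i ∩ Xi j).Nonempty :=
  stmt7_general T hT htt x hx μ hμ S k h hkh hsynd Si hSi Xi hXi
end

section
/- Every subset S of ℕ that is not syndetic is an interpolation set for strongly mixing systems: for every bounded function f : S → ℂ there exists a strongly mixing topological dynamical system (X,T), a transitive point x ∈ X, and a continuous function F : X → ℂ such that F(Tⁿx) = f(n) for all n ∈ S. -/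
/-!
The full shift `σ` on `K^ℕ`, `K` a compact disc in `ℂ` containing `f(S)`, is strongly mixing:
given `u` and `v`, the point that reads `v` on `[0, n)` and then `u` is mapped to `u` by `σⁿ`
and tends to `v`. A transitive point interpolating `f` is obtained by writing longer and longer
initial segments of every term of a dense sequence of `K^ℕ` into disjoint gaps of `S`, and `f`
everywhere else; then `F z = z 0` interpolates `f` along its orbit.
-/

open Filter Topology Set

namespace FullShift

variable {A : Type*}

def shift (z : ℕ → A) : ℕ → A := fun i => z (i + 1)

theorem shift_iterate_apply (n : ℕ) (z : ℕ → A) (i : ℕ) : shift^[n] z i = z (i + n) := by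
  induction n generalizing i with
  | zero => rfl
  | succ n ih =>
    rw [Function.iterate_succ_apply', shift, ih]
    ac_rfl

theorem continuous_shift [TopologicalSpace A] : Continuous (shift : (ℕ → A) → ℕ → A) :=
  continuous_pi fun i => continuous_apply (i + 1)

theorem tendsto_of_forall_lt_eq [TopologicalSpace A] {w : ℕ → ℕ → A} {v : ℕ → A}
    (h : ∀ n, ∀ i < n, w n i = v i) : Tendsto w atTop (𝓝 v) :=
  tendsto_pi_nhds.2 fun i =>
    tendsto_const_nhds.congr' ((eventually_gt_atTop i).mono fun n hn => (h n i hn).symm)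

def splice (v u : ℕ → A) (n : ℕ) : ℕ → A := fun i => if i < n then v i else u (i - n)

theorem shift_iterate_splice (v u : ℕ → A) (n : ℕ) : shift^[n] (splice v u n) = u := by
  ext i
  simp [shift_iterate_apply, splice]

theorem tendsto_splice [TopologicalSpace A] (v u : ℕ → A) :
    Tendsto (splice v u) atTop (𝓝 v) :=
  tendsto_of_forall_lt_eq fun _ _ hi => if_pos hi

theorem eventually_shift_iterate_preimage_inter_nonempty [TopologicalSpace A]
    {U V : Set (ℕ → A)} (hV : IsOpen V) (hU : U.Nonempty) (hV' : V.Nonempty) :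
    ∀ᶠ n in atTop, (shift^[n] ⁻¹' U ∩ V).Nonempty := by
  obtain ⟨u, hu⟩ := hU
  obtain ⟨v, hv⟩ := hV'
  filter_upwards [(tendsto_splice v u).eventually (hV.mem_nhds hv)] with n hn
  exact ⟨splice v u n, by rw [mem_preimage, shift_iterate_splice]; exact hu, hn⟩

end FullShift

open FullShift

section Gaps

theorem exists_gap_ge {S : Set ℕ} (hS : ∀ n : ℕ, ∃ m : ℕ, ∀ i < n, m + i ∉ S)
    (B L : ℕ) : ∃ m, B ≤ m ∧ ∀ i < L, m + i ∉ S := by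
  obtain ⟨m, hm⟩ := hS (B + L)
  refine ⟨m + B, by omega, fun i hi => ?_⟩
  rw [add_assoc]
  exact hm (B + i) (by omega)

theorem exists_blocks_in_gaps {S : Set ℕ} (hS : ∀ B L, ∃ m, B ≤ m ∧ ∀ i < L, m + i ∉ S)
    (len : ℕ → ℕ) :
    ∃ pos : ℕ → ℕ, (∀ j, ∀ i < len j, pos j + i ∉ S) ∧ ∀ j, pos j + len j ≤ pos (j + 1) := by
  choose gap hge hgap using hS
  let pos : ℕ → ℕ := fun j => Nat.rec (gap 0 (len 0)) (fun j p => gap (p + len j) (len (j + 1))) j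
  refine ⟨pos, fun j => ?_, fun j => hge _ _⟩
  cases j <;> exact hgap _ _

variable {pos len : ℕ → ℕ}

theorem add_le_of_blocks (hpos : ∀ j, pos j + len j ≤ pos (j + 1)) {j l : ℕ} (hjl : j < l) :
    pos j + len j ≤ pos l :=
  (hpos j).trans (monotone_nat_of_le_succ (fun k => (Nat.le_add_right _ _).trans (hpos k)) hjl)

theorem eq_of_mem_blocks (hpos : ∀ j, pos j + len j ≤ pos (j + 1)) {n j l : ℕ}
    (hj : n ∈ Ico (pos j) (pos j + len j)) (hl : n ∈ Ico (pos l) (pos l + len l)) : j = l := by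
  rcases lt_trichotomy j l with h | h | h
  · have := add_le_of_blocks hpos h; simp only [mem_Ico] at hj hl; omega
  · exact h
  · have := add_le_of_blocks hpos h; simp only [mem_Ico] at hj hl; omega

theorem exists_fill_blocks {A : Type*} (hpos : ∀ j, pos j + len j ≤ pos (j + 1))
    (word : ℕ → ℕ → A) (g : ℕ → A) :
    ∃ x : ℕ → A, (∀ j, ∀ i < len j, x (pos j + i) = word j i) ∧
      ∀ n, (∀ j, n ∉ Ico (pos j) (pos j + len j)) → x n = g n := by
  classical
  refine ⟨fun n => if h : ∃ j, n ∈ Ico (pos j) (pos j + len j) then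
    word (Nat.find h) (n - pos (Nat.find h)) else g n, fun j i hi => ?_, fun n hn => ?_⟩
  · have hmem : pos j + i ∈ Ico (pos j) (pos j + len j) := by simp [hi]
    have hex : ∃ l, pos j + i ∈ Ico (pos l) (pos l + len l) := ⟨j, hmem⟩
    have hfind : Nat.find hex = j := eq_of_mem_blocks hpos (Nat.find_spec hex) hmem
    dsimp only
    rw [dif_pos hex, hfind, Nat.add_sub_cancel_left]
  · simp [hn]

end Gaps

theorem exists_dense_shift_orbit_eqOn {A : Type*} [TopologicalSpace A]
    [TopologicalSpace.SeparableSpace A] {S : Set ℕ}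
    (hS : ∀ B L, ∃ m, B ≤ m ∧ ∀ i < L, m + i ∉ S) (g : ℕ → A) :
    ∃ x : ℕ → A, Dense (range fun n => shift^[n] x) ∧ EqOn x g S := by
  have : Nonempty A := ⟨g 0⟩
  let y := TopologicalSpace.denseSeq (ℕ → A)
  -- block `Nat.pair k N` carries the first `N` terms of `y k`
  obtain ⟨pos, hgap, hpos⟩ := exists_blocks_in_gaps hS fun j => (Nat.unpair j).2
  obtain ⟨x, hword, hx⟩ := exists_fill_blocks hpos (fun j => y (Nat.unpair j).1) g
  refine ⟨x, ?_, fun n hn => hx n fun j hj => ?_⟩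
  · have hy : range y ⊆ closure (range fun n => shift^[n] x) := by
      rintro _ ⟨k, rfl⟩
      refine mem_closure_of_tendsto (tendsto_of_forall_lt_eq fun N i hi => ?_)
        (Eventually.of_forall fun N => mem_range_self (pos (Nat.pair k N)))
      simpa [shift_iterate_apply, add_comm i] using hword (Nat.pair k N) i (by simpa using hi)
    exact dense_closure.1 ((TopologicalSpace.denseRange_denseSeq _).mono hy)
  · obtain ⟨h₁, h₂⟩ := hj
    exact hgap j (n - pos j) (by omega) (by rwa [Nat.add_sub_cancel' h₁])

/-- Every non-syndetic `S ⊆ ℕ` is an interpolation set for strongly mixing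
systems: every bounded `f : S → ℂ` extends to a sequence `n ↦ F(Tⁿx)` with `(X,T)` a
strongly mixing system on a compact metric space, `x` a transitive point and `F` continuous. -/
theorem stmt8 (S : Set ℕ)
    (hS : ∀ n : ℕ, ∃ m : ℕ, 0 < m ∧ ∀ i < n, m + i ∉ S)
    (f : ℕ → ℂ) (hf : ∃ C : ℝ, ∀ n ∈ S, ‖f n‖ ≤ C) :
    ∃ (X : Type) (_ : MetricSpace X) (_ : CompactSpace X) (T : X → X),
      Continuous T ∧
      (∀ U V : Set X, IsOpen U → IsOpen V → U.Nonempty → V.Nonempty →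
        {n : ℕ | ((fun y => T^[n] y) ⁻¹' U ∩ V).Nonempty} ∈ Filter.cofinite) ∧
      ∃ (x : X) (F : X → ℂ),
        Dense (Set.range fun n : ℕ => T^[n] x) ∧ Continuous F ∧
        ∀ n ∈ S, F (T^[n] x) = f n := by
  classical
  obtain ⟨C, hC⟩ := hf
  let K := Metric.closedBall (0 : ℂ) |C|
  have hfK : ∀ n ∈ S, f n ∈ K := fun n hn =>
    mem_closedBall_zero_iff.2 ((hC n hn).trans (le_abs_self C))
  have : CompactSpace K := isCompact_iff_compactSpace.1 (isCompact_closedBall 0 |C|)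
  let : MetricSpace (ℕ → K) := TopologicalSpace.metrizableSpaceMetric _
  let g : ℕ → K := fun n => if h : f n ∈ K then ⟨f n, h⟩ else ⟨0, by simp [K]⟩
  obtain ⟨x, hdense, hxg⟩ := exists_dense_shift_orbit_eqOn
    (exists_gap_ge fun n => (hS n).imp fun _ => And.right) g
  refine ⟨ℕ → K, inferInstance, inferInstance, shift, continuous_shift,
    fun U V _ hV hU hV' => ?_, x, fun z => z 0, hdense, by fun_prop, fun n hn => ?_⟩
  · rw [Nat.cofinite_eq_atTop]
    exact eventually_shift_iterate_preimage_inter_nonempty hV hU hV'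
  · simp [shift_iterate_apply, hxg hn, g, hfK n hn]
end

section
/- Every subset S ⊆ ℕ with zero upper Banach density is an interpolation set for systems of zero topological entropy: for every bounded f : S → ℂ, extend f by 0 off S to get f̃ : ℕ₀ → ℂ; then the orbit closure X of f̃ under the left shift σ has topological entropy zero, f̃ is a transitive point of (X,σ), and the 0th-coordinate function F(x) = x(0) satisfies F(σⁿ f̃) = f(n) for all n ∈ S. -/
open scoped Classical

/-- The upper Banach density of `A ⊆ ℕ` is zero:
`d*(A) = lim_{n→∞} sup_m |A ∩ [m, m+n)| / n = 0`. -/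
def UpperBanachDensityZero (A : Set ℕ) : Prop :=
  Filter.Tendsto
    (fun n : ℕ => ⨆ m : ℕ, (Nat.card ↥(A ∩ Set.Ico m (m + n)) : ℝ) / n)
    Filter.atTop (nhds 0)

/-!
Entourages of the product uniformity on `ℕ → ℂ` only look at finitely many coordinates, so an
`n`-step dynamical cover of the orbit closure only has to approximate the first `N = n + k`
coordinates. Every point of the orbit closure of `f̃` is bounded by `C` and, once `N` is large,
has at most `δ N` nonzero entries among its first `N` coordinates: this is a closed condition
satisfied by every shift of `f̃`. If `G` is an `ε`-net of the ball of radius `C` with `g` points,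
such sequences are `ε`-approximated on their first `N` coordinates by at most
`∑_{j ≤ δN} (N choose j) g^j ≤ (g/δ)^{δN} (1+δ)^N` sequences. Hence covers grow at exponential
rate at most `log (1+δ) + δ log (g/δ)`, which tends to `0` with `δ`.
-/

open Filter Set Dynamics Topology Uniformity SetRel

section Shift

variable {α : Type*}

def shift (x : ℕ → α) : ℕ → α := fun n => x (n + 1)

lemma shift_iterate_apply (m : ℕ) (x : ℕ → α) (t : ℕ) : shift^[m] x t = x (t + m) := by
  induction m generalizing x with
  | zero => rfl
  | succ m ih => rw [Function.iterate_succ_apply, ih, shift, add_assoc]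

lemma continuous_shift [TopologicalSpace α] : Continuous (shift : (ℕ → α) → ℕ → α) :=
  continuous_pi fun n => continuous_apply (n + 1)

end Shift

lemma mapsTo_closure_range_iterate {X : Type*} [TopologicalSpace X] {T : X → X}
    (hT : Continuous T) (x : X) :
    MapsTo T (closure (range fun m => T^[m] x)) (closure (range fun m => T^[m] x)) := by
  refine MapsTo.closure ?_ hT
  rintro _ ⟨m, rfl⟩
  exact ⟨m + 1, Function.iterate_succ_apply' T m x⟩

section PrefixEntourage

variable {α : Type*} [PseudoMetricSpace α]

def prefixEntourage (k : ℕ) (ε : ℝ) : SetRel (ℕ → α) (ℕ → α) :=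
  {p | ∀ i < k, dist (p.1 i) (p.2 i) ≤ ε}

instance (k : ℕ) (ε : ℝ) : (prefixEntourage (α := α) k ε).IsSymm :=
  ⟨fun _ _ h i hi => by rw [dist_comm]; exact h i hi⟩

lemma prefixEntourage_comp_self_subset (k : ℕ) (ε : ℝ) :
    prefixEntourage (α := α) k (ε / 2) ○ prefixEntourage k (ε / 2) ⊆ prefixEntourage k ε := by
  rintro ⟨x, z⟩ ⟨y, hxy, hyz⟩ i hi
  linarith [dist_triangle (x i) (y i) (z i), hxy i hi, hyz i hi]

lemma hasBasis_uniformity_prefixEntourage :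
    (𝓤 (ℕ → α)).HasBasis (fun p : ℕ × ℝ => 0 < p.2) fun p => prefixEntourage p.1 p.2 := by
  have hB := HasBasis.iInf' fun i : ℕ =>
    (Metric.uniformity_basis_dist_le (α := α)).comap fun p : (ℕ → α) × (ℕ → α) => (p.1 i, p.2 i)
  rw [← Pi.uniformity] at hB
  refine hB.to_hasBasis (fun ⟨I, ε⟩ ⟨hI, hε⟩ => ?_) fun ⟨k, ε⟩ hε =>
    ⟨⟨Iio k, fun _ => ε⟩, ⟨finite_Iio k, fun _ _ => hε⟩, fun p hp i hi => mem_iInter₂.1 hp i hi⟩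
  obtain ⟨k, hk⟩ := ((eventually_all_finite hI).2 fun i _ => eventually_gt_atTop i).exists
  obtain ⟨δ, hδε, hδ⟩ := (((eventually_all_finite hI).2 fun i hi =>
    (eventually_le_nhds (hε i hi)).filter_mono nhdsWithin_le_nhds).and
    (eventually_mem_nhdsWithin (a := (0 : ℝ)) (s := Ioi 0))).exists
  exact ⟨(k, δ), hδ, fun p hp => mem_iInter₂.2 fun i hi => (hp i (hk i hi)).trans (hδε i hi)⟩

lemma isDynCoverOf_shift_prefixEntourage {F : Set (ℕ → α)} {s : Set (ℕ → α)} {n k : ℕ} {ε : ℝ}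
    (h : ∀ x ∈ F, ∃ y ∈ s, ∀ t < n + k, dist (x t) (y t) ≤ ε) :
    IsDynCoverOf shift F (prefixEntourage k ε) n s := by
  intro x hx
  obtain ⟨y, hys, hy⟩ := h x hx
  refine ⟨y, hys, mem_dynEntourage.2 fun j hj i hi => ?_⟩
  simp only [shift_iterate_apply]
  exact hy _ (by omega)

end PrefixEntourage

lemma coverEntropyEntourage_comp_self_nonpos {X : Type*} {T : X → X} {F : Set X}
    (hF : MapsTo T F F) {V : SetRel X X} [V.IsSymm]
    (h : ∀ a : ℝ, 0 < a → ∃ n ≠ 0, ∃ s : Finset X, IsDynCoverOf T F V n s ∧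
      (s.card : ℝ) ≤ Real.exp (a * n)) :
    coverEntropyEntourage T F (V ○ V) ≤ 0 := by
  refine EReal.le_of_forall_lt_iff_le.1 fun a ha => ?_
  obtain ⟨n, hn, s, hcov, hcard⟩ := h a (by exact_mod_cast ha)
  refine (hcov.coverEntropyEntourage_le_log_card_div hF hn).trans ?_
  have hlog : ENNReal.log s.card ≤ ((a * n : ℝ) : EReal) := by
    rw [← Real.log_exp (a * n), ← ENNReal.log_ofReal_of_pos (Real.exp_pos _)]
    exact ENNReal.log_le_log (by simpa using ENNReal.ofReal_le_ofReal hcard)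
  rw [EReal.div_le_iff_le_mul (by exact_mod_cast Nat.pos_of_ne_zero hn) (EReal.natCast_ne_top n)]
  exact hlog.trans_eq (by rw [mul_comm]; norm_cast)

section Sparse

open Finset

variable {E : Type*} [NormedAddCommGroup E]

def sparsePrefixSet (C : ℝ) (N d : ℕ) : Set (ℕ → E) :=
  {x | (∀ t, ‖x t‖ ≤ C) ∧ #{t : Fin N | x t ≠ 0} ≤ d}

lemma isClosed_sparsePrefixSet (C : ℝ) (N d : ℕ) : IsClosed (sparsePrefixSet (E := E) C N d) := by
  have hC : IsClosed {x : ℕ → E | ∀ t, ‖x t‖ ≤ C} := by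
    rw [ofPred_forall]
    exact isClosed_iInter fun t => isClosed_le (by fun_prop) continuous_const
  refine hC.inter (?_ : IsClosed {x : ℕ → E | #{t : Fin N | x t ≠ 0} ≤ d})
  rw [← isOpen_compl_iff, isOpen_iff_forall_mem_open]
  intro x hx
  refine ⟨⋂ t ∈ ({t : Fin N | x t ≠ 0} : Finset (Fin N)), {y | y t ≠ 0}, fun y hy => ?_,
    isOpen_biInter_finset fun t _ => isOpen_ne_fun (continuous_apply _) continuous_const,
    mem_iInter₂.2 fun t ht => (mem_filter.1 ht).2⟩
  simp only [mem_compl_iff, mem_ofPred_eq, not_le] at hx ⊢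
  exact hx.trans_le (card_le_card fun t ht => mem_filter.2 ⟨mem_univ _, mem_iInter₂.1 hy t ht⟩)

lemma exists_finset_nonempty_forall_norm_le_exists_dist_le [ProperSpace E] (C : ℝ) {ε : ℝ}
    (hε : 0 < ε) : ∃ G : Finset E, G.Nonempty ∧ ∀ z, ‖z‖ ≤ C → ∃ g ∈ G, dist z g ≤ ε := by
  obtain ⟨t, -, ht, hcov⟩ :=
    Metric.finite_approx_of_totallyBounded (isCompact_closedBall (0 : E) C).totallyBounded ε hε
  refine ⟨insert 0 ht.toFinset, insert_nonempty _ _, fun z hz => ?_⟩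
  obtain ⟨g, hg, hzg⟩ := mem_iUnion₂.1 (hcov (mem_closedBall_zero_iff.2 hz))
  exact ⟨g, mem_insert_of_mem (ht.mem_toFinset.2 hg), (Metric.mem_ball.1 hzg).le⟩

lemma exists_finset_approx_sparsePrefixSet {C ε : ℝ} (hε : 0 ≤ ε) {G : Finset E}
    (hG : ∀ z, ‖z‖ ≤ C → ∃ g ∈ G, dist z g ≤ ε) (N d : ℕ) :
    ∃ s : Finset (ℕ → E), #s ≤ ∑ j ∈ range (d + 1), N.choose j * #G ^ j ∧
      ∀ x ∈ sparsePrefixSet C N d, ∃ y ∈ s, ∀ t < N, dist (x t) (y t) ≤ ε := by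
  choose r hrG hr using hG
  let ext : (Fin N → E) → ℕ → E := fun v t => if h : t < N then v ⟨t, h⟩ else 0
  let P : Finset (Fin N → E) := (range (d + 1)).biUnion fun j =>
    (powersetCard j univ).biUnion fun A => Fintype.piFinset fun t => if t ∈ A then G else {0}
  refine ⟨P.image ext, ?_, ?_⟩
  · have hpi : ∀ j, ∀ A ∈ powersetCard j (univ : Finset (Fin N)),
        #(Fintype.piFinset fun t => if t ∈ A then G else {0}) = #G ^ j := by
      intro j A hA
      calc #(Fintype.piFinset fun t => if t ∈ A then G else {0})
          = ∏ t, if t ∈ A then #G else 1 := by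
            rw [Fintype.card_piFinset]
            exact prod_congr rfl fun t _ => by split_ifs <;> simp
        _ = #G ^ j := by
            rw [prod_ite_mem, Finset.univ_inter, prod_const, (mem_powersetCard.1 hA).2]
    calc #(P.image ext) ≤ #P := card_image_le
      _ ≤ ∑ j ∈ range (d + 1), ∑ A ∈ powersetCard j univ,
            #(Fintype.piFinset fun t => if t ∈ A then G else {0}) :=
          card_biUnion_le.trans (sum_le_sum fun j _ => card_biUnion_le)
      _ = ∑ j ∈ range (d + 1), N.choose j * #G ^ j := sum_congr rfl fun j _ => by
          rw [sum_congr rfl (hpi j), sum_const, card_powersetCard, card_univ, Fintype.card_fin,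
            smul_eq_mul]
  · rintro x ⟨hxC, hxd⟩
    let A : Finset (Fin N) := {t | x t ≠ 0}
    let v : Fin N → E := fun t => if t ∈ A then r (x t) (hxC t) else 0
    refine ⟨ext v, mem_image_of_mem ext (mem_biUnion.2 ⟨#A, mem_range.2 (Nat.lt_succ_of_le hxd),
      mem_biUnion.2 ⟨A, mem_powersetCard.2 ⟨subset_univ _, rfl⟩,
        Fintype.mem_piFinset.2 fun t => ?_⟩⟩), fun t ht => ?_⟩
    · by_cases htA : t ∈ A <;> simp [v, htA, hrG]
    · by_cases htA : (⟨t, ht⟩ : Fin N) ∈ A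
      · simp only [ext, v, dif_pos ht, if_pos htA]
        exact hr _ _
      · have hx0 : x t = 0 := by simpa [A] using htA
        simp [ext, v, ht, htA, hx0, hε]

end Sparse

section Counting

open Finset

lemma sum_choose_mul_pow_le {N d : ℕ} (hdN : d ≤ N) {g δ : ℝ} (hδ : 0 < δ) (hδg : δ ≤ g) :
    ∑ j ∈ range (d + 1), (N.choose j : ℝ) * g ^ j ≤ (g / δ) ^ d * (1 + δ) ^ N := by
  have hgδ : 1 ≤ g / δ := (one_le_div hδ).2 hδg
  calc ∑ j ∈ range (d + 1), (N.choose j : ℝ) * g ^ j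
      = ∑ j ∈ range (d + 1), (g / δ) ^ j * (δ ^ j * N.choose j) :=
        sum_congr rfl fun j _ => by rw [div_pow]; field_simp
    _ ≤ ∑ j ∈ range (d + 1), (g / δ) ^ d * (δ ^ j * N.choose j) :=
        sum_le_sum fun j hj => mul_le_mul_of_nonneg_right
          (pow_le_pow_right₀ hgδ (Nat.lt_succ_iff.1 (mem_range.1 hj))) (by positivity)
    _ ≤ ∑ j ∈ range (N + 1), (g / δ) ^ d * (δ ^ j * N.choose j) :=
        sum_le_sum_of_subset_of_nonneg (range_subset_range.2 (by omega))
          fun _ _ _ => by positivity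
    _ = (g / δ) ^ d * (1 + δ) ^ N := by
        rw [← mul_sum, add_comm 1 δ, add_pow]
        simp only [one_pow, mul_one]

lemma tendsto_log_one_add_add_mul_log_sub_log (g : ℝ) :
    Tendsto (fun δ => Real.log (1 + δ) + δ * (Real.log g - Real.log δ)) (𝓝[>] 0) (𝓝 0) := by
  have h₁ : Tendsto (fun δ => Real.log (1 + δ) + δ * Real.log g) (𝓝 0) (𝓝 0) := by
    have : ContinuousAt (fun δ => Real.log (1 + δ) + δ * Real.log g) 0 := by
      fun_prop (disch := norm_num)
    simpa using this.tendsto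
  have h₂ : Tendsto (fun δ => Real.log δ * δ) (𝓝[>] 0) (𝓝 0) := by
    simpa using tendsto_log_mul_rpow_nhdsGT_zero zero_lt_one
  convert (h₁.mono_left nhdsWithin_le_nhds).sub h₂ using 2 <;> ring

lemma exists_pos_forall_sum_choose_mul_pow_le_exp {g : ℝ} (hg : 1 ≤ g) {a : ℝ} (ha : 0 < a) :
    ∃ δ > 0, ∀ N d : ℕ, (d : ℝ) ≤ δ * N →
      ∑ j ∈ range (d + 1), (N.choose j : ℝ) * g ^ j ≤ Real.exp (a * N) := by
  obtain ⟨δ, hψ, hδ0, hδ1⟩ := (((tendsto_log_one_add_add_mul_log_sub_log g).eventually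
    (gt_mem_nhds ha)).and (Ioo_mem_nhdsGT one_pos)).exists
  refine ⟨δ, hδ0, fun N d hd => ?_⟩
  have hdN : d ≤ N := by exact_mod_cast hd.trans (mul_le_of_le_one_left (by positivity) hδ1.le)
  have hsum : 0 < ∑ j ∈ range (d + 1), (N.choose j : ℝ) * g ^ j :=
    sum_pos' (fun _ _ => by positivity) ⟨0, by simp, by simp⟩
  have hlog : 0 ≤ Real.log (g / δ) := Real.log_nonneg ((one_le_div hδ0).2 (by linarith))
  rw [← Real.log_le_iff_le_exp hsum]
  calc Real.log (∑ j ∈ range (d + 1), (N.choose j : ℝ) * g ^ j)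
      ≤ Real.log ((g / δ) ^ d * (1 + δ) ^ N) :=
        Real.log_le_log hsum (sum_choose_mul_pow_le hdN hδ0 (by linarith))
    _ = d * Real.log (g / δ) + N * Real.log (1 + δ) := by
        rw [Real.log_mul (by positivity) (by positivity), Real.log_pow, Real.log_pow]
    _ ≤ δ * N * Real.log (g / δ) + N * Real.log (1 + δ) := by gcongr
    _ = N * (Real.log (1 + δ) + δ * (Real.log g - Real.log δ)) := by
        rw [Real.log_div (by positivity) hδ0.ne']; ring
    _ ≤ a * N := by rw [mul_comm a]; exact mul_le_mul_of_nonneg_left hψ.le (Nat.cast_nonneg N)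

end Counting

lemma UpperBanachDensityZero.eventually_natCard_le {S : Set ℕ} (hS : UpperBanachDensityZero S)
    {δ : ℝ} (hδ : 0 < δ) :
    ∀ᶠ N in atTop, ∀ m, (Nat.card ↥(S ∩ Ico m (m + N)) : ℝ) ≤ δ * N := by
  filter_upwards [hS.eventually (gt_mem_nhds hδ), eventually_gt_atTop 0] with N hN hNpos m
  have hN' : (0 : ℝ) < N := by exact_mod_cast hNpos
  have hle : ∀ m, (Nat.card ↥(S ∩ Ico m (m + N)) : ℝ) ≤ N := fun m => by
    exact_mod_cast (Nat.card_mono (finite_Ico _ _) inter_subset_right).trans (by simp)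
  have := (le_ciSup ⟨1, forall_mem_range.2 fun m => (div_le_one hN').2 (hle m)⟩ m).trans_lt hN
  exact ((div_lt_iff₀ hN').1 this).le

section OrbitClosure

open Finset

variable {E : Type*} [NormedAddCommGroup E] {S : Set ℕ} {y : ℕ → E} {C : ℝ}

lemma card_filter_ne_zero_le_natCard (hy : ∀ t ∉ S, y t = 0) (N m : ℕ) :
    #{t : Fin N | y (t + m) ≠ 0} ≤ Nat.card ↥(S ∩ Set.Ico m (m + N)) := by
  rw [← Set.ncard_coe_finset, Nat.card_coe_set_eq]
  refine Set.ncard_le_ncard_of_injOn (fun t : Fin N => (t : ℕ) + m) (fun t ht => ⟨?_, ?_⟩)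
    (fun t _ t' _ h => Fin.ext (by simpa using h)) ((finite_Ico _ _).inter_of_right S)
  · by_contra hS
    simp [hy _ hS] at ht
  · simp only [Set.mem_Ico]
    omega

lemma closure_range_iterate_shift_subset_sparsePrefixSet {N d : ℕ} (hC : ∀ t, ‖y t‖ ≤ C)
    (hd : ∀ m, #{t : Fin N | y (t + m) ≠ 0} ≤ d) :
    closure (range fun m => shift^[m] y) ⊆ sparsePrefixSet C N d := by
  refine closure_minimal (range_subset_iff.2 fun m => ⟨fun t => ?_, ?_⟩)
    (isClosed_sparsePrefixSet C N d)
  · rw [shift_iterate_apply]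
    exact hC _
  · simpa only [shift_iterate_apply] using hd m

variable [ProperSpace E]

lemma exists_isDynCoverOf_closure_range_iterate_shift (hS : UpperBanachDensityZero S)
    (hy : ∀ t ∉ S, y t = 0) (hC : ∀ t, ‖y t‖ ≤ C) (k : ℕ) {ε : ℝ} (hε : 0 < ε) {a : ℝ}
    (ha : 0 < a) : ∃ n ≠ 0, ∃ s : Finset (ℕ → E),
      IsDynCoverOf shift (closure (range fun m => shift^[m] y)) (prefixEntourage k ε) n s ∧
      (#s : ℝ) ≤ Real.exp (a * n) := by
  obtain ⟨G, hG0, hG⟩ := exists_finset_nonempty_forall_norm_le_exists_dist_le (E := E) C hε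
  obtain ⟨δ, hδ, hsum⟩ :=
    exists_pos_forall_sum_choose_mul_pow_le_exp (g := #G) (by exact_mod_cast hG0.card_pos)
      (half_pos ha)
  obtain ⟨N, hdens, hN⟩ := ((hS.eventually_natCard_le hδ).and (eventually_gt_atTop (2 * k))).exists
  obtain ⟨s, hcard, hs⟩ := exists_finset_approx_sparsePrefixSet hε.le hG N ⌊δ * N⌋₊
  have hsparse : ∀ m, #{t : Fin N | y (t + m) ≠ 0} ≤ ⌊δ * N⌋₊ := fun m =>
    Nat.le_floor ((Nat.cast_le.2 (card_filter_ne_zero_le_natCard hy N m)).trans (hdens m))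
  refine ⟨N - k, by omega, s, isDynCoverOf_shift_prefixEntourage fun x hx => ?_, ?_⟩
  · obtain ⟨z, hz, hxz⟩ :=
      hs x (closure_range_iterate_shift_subset_sparsePrefixSet hC hsparse hx)
    exact ⟨z, hz, fun t ht => hxz t (by omega)⟩
  · have hNk : (N : ℝ) ≤ 2 * (N - k : ℕ) := by exact_mod_cast (by omega : N ≤ 2 * (N - k))
    calc (#s : ℝ) ≤ ∑ j ∈ range (⌊δ * N⌋₊ + 1), (N.choose j : ℝ) * #G ^ j := by
          exact_mod_cast hcard
      _ ≤ Real.exp (a / 2 * N) := hsum N _ (Nat.floor_le (by positivity))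
      _ ≤ Real.exp (a * (N - k : ℕ)) := Real.exp_le_exp.2 (by nlinarith)

theorem coverEntropy_shift_closure_range_iterate_eq_zero (hS : UpperBanachDensityZero S)
    (hy : ∀ t ∉ S, y t = 0) (hC : ∀ t, ‖y t‖ ≤ C) :
    coverEntropy shift (closure (range fun m => shift^[m] y)) = 0 := by
  refine le_antisymm ?_ (coverEntropy_nonneg _ ⟨y, subset_closure ⟨0, rfl⟩⟩)
  rw [coverEntropy_eq_iSup_basis hasBasis_uniformity_prefixEntourage]
  refine iSup₂_le fun ⟨k, ε⟩ hε => ?_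
  exact (coverEntropyEntourage_antitone _ _ (prefixEntourage_comp_self_subset k ε)).trans
    (coverEntropyEntourage_comp_self_nonpos (mapsTo_closure_range_iterate continuous_shift y)
      fun a ha => exists_isDynCoverOf_closure_range_iterate_shift hS hy hC k (half_pos hε) ha)

end OrbitClosure

/-- If `S ⊆ ℕ` has zero upper Banach density and `f : S → ℂ` is bounded, then
extending `f` by `0` off `S` to `f̃ : ℕ₀ → ℂ`, the orbit closure `X` of `f̃` under the left
shift `σ` is `σ`-invariant, has topological entropy zero, `f̃` is a transitive point of
`(X,σ)`, and the continuous 0th-coordinate function `F(x) = x 0` satisfies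
`F(σⁿ f̃) = f(n)` for all `n ∈ S`. -/
theorem stmt9 (S : Set ℕ) (hS : UpperBanachDensityZero S)
    (f : ℕ → ℂ) (hf : ∃ C : ℝ, ∀ n ∈ S, ‖f n‖ ≤ C)
    (ftilde : ℕ → ℂ) (hft : ∀ n : ℕ, ftilde n = if n ∈ S then f n else 0)
    (σ : (ℕ → ℂ) → (ℕ → ℂ)) (hσ : ∀ x n, σ x n = x (n + 1))
    (X : Set (ℕ → ℂ)) (hX : X = closure (Set.range fun m : ℕ => σ^[m] ftilde)) :
    Set.MapsTo σ X X ∧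
    Dynamics.coverEntropy σ X = 0 ∧
    ftilde ∈ X ∧
    X = closure (Set.range fun m : ℕ => σ^[m] ftilde) ∧
    Continuous (fun x : ℕ → ℂ => x 0) ∧
    ∀ n ∈ S, (σ^[n] ftilde) 0 = f n := by
  obtain ⟨C, hC⟩ := hf
  obtain rfl : σ = shift := funext fun x => funext (hσ x)
  subst hX
  have hzero : ∀ t ∉ S, ftilde t = 0 := fun t ht => by rw [hft, if_neg ht]
  have hbound : ∀ t, ‖ftilde t‖ ≤ max C 0 := fun t => by
    by_cases ht : t ∈ S
    · rw [hft, if_pos ht]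
      exact (hC t ht).trans (le_max_left _ _)
    · simp [hzero t ht]
  refine ⟨mapsTo_closure_range_iterate continuous_shift _,
    coverEntropy_shift_closure_range_iterate_eq_zero hS hzero hbound, subset_closure ⟨0, rfl⟩, rfl,
    continuous_apply 0, fun n hn => ?_⟩
  rw [shift_iterate_apply, zero_add, hft, if_pos hn]
end

section
/- There exists a set F ⊆ ℕ such that (i) for every n ∈ ℕ, the set F − n contains an IP-set, and (ii) F is sum-free: for all x, y ∈ F, x + y ∉ F. In particular F is not an IP-set. -/
/-!
Reserve for each level `n ≥ 1` its own infinite set of decimal positions, all at least `n`, and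
let `F` consist of the numbers `n + ∑_{e ∈ A} 10^e` with `A` a nonempty finite set of level-`n`
positions. Then `F - n` contains the IP-set generated by the powers `10^e` of level `n`.

If `x + y = z` in `F` with `x ≤ y`, then `y` and `z` have the same leading decimal position, so
they have the same level `n`, and `x = ∑_B 10^e - ∑_A 10^e` for level-`n` position sets `A`, `B`.
Let `m` be the level of `x`. If `m ≤ n`, reducing mod `10^m` gives `m ≡ 0`, impossible as
`0 < m < 10^m`. If `m > n`, the leading position `P` of `x` is not a level-`n` position, so modulo
`10^(P+1)` both `∑_A 10^e` and `∑_B 10^e` leave remainders below `10^P ≤ x`, which contradicts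
`x + ∑_A 10^e = ∑_B 10^e`.
-/

open Finset

/-- `A ⊆ ℕ` is an IP-set if it contains an increasing sequence of positive integers
together with all its finite sums (over distinct indices). -/
def IsIPSet (A : Set ℕ) : Prop :=
  ∃ a : ℕ → ℕ, StrictMono a ∧ 0 < a 0 ∧
    ∀ t : Finset ℕ, t.Nonempty → (∑ i ∈ t, a i) ∈ A

theorem not_isIPSet_of_add_notMem {F : Set ℕ} (hF : ∀ x ∈ F, ∀ y ∈ F, x + y ∉ F) :
    ¬ IsIPSet F := by
  rintro ⟨a, -, -, hsum⟩
  have h01 := hsum {0, 1} (insert_nonempty 0 {1})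
  rw [sum_pair zero_ne_one] at h01
  exact hF _ (by simpa using hsum {0} (singleton_nonempty 0)) _
    (by simpa using hsum {1} (singleton_nonempty 1)) h01

section Digits

variable {b : ℕ}

theorem add_sum_pow_modEq {m : ℕ} (n : ℕ) {A : Finset ℕ} (hA : ∀ e ∈ A, m ≤ e) :
    n + ∑ e ∈ A, b ^ e ≡ n [MOD b ^ m] := by
  have hdvd : b ^ m ∣ ∑ e ∈ A, b ^ e := dvd_sum fun e he => pow_dvd_pow b (hA e he)
  simpa using (Nat.modEq_zero_iff_dvd.2 hdvd).add_left n

theorem sum_pow_mod_pow_succ_lt (hb : 2 ≤ b) {P : ℕ} {A : Finset ℕ} (hP : P ∉ A) :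
    (∑ e ∈ A, b ^ e) % b ^ (P + 1) < b ^ P := by
  have hhigh : b ^ (P + 1) ∣ ∑ e ∈ A with ¬e < P + 1, b ^ e :=
    dvd_sum fun e he => pow_dvd_pow b (not_lt.1 (mem_filter.1 he).2)
  have hlow : ∑ e ∈ A with e < P + 1, b ^ e < b ^ P := Nat.geomSum_lt hb fun e he => by
    obtain ⟨heA, heP⟩ := mem_filter.1 he
    exact lt_of_le_of_ne (Nat.lt_succ_iff.1 heP) (ne_of_mem_of_not_mem heA hP)
  obtain ⟨q, hq⟩ := hhigh
  rw [← sum_filter_add_sum_filter_not A (· < P + 1), hq, Nat.add_mul_mod_self_left,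
    Nat.mod_eq_of_lt (hlow.trans (Nat.pow_lt_pow_right hb P.lt_succ_self))]
  exact hlow

theorem pow_max'_le_add_sum_pow (hb : 2 ≤ b) {n : ℕ} {A : Finset ℕ} (hA : A.Nonempty)
    (hn : n < b ^ A.max' hA) :
    b ^ A.max' hA ≤ n + ∑ e ∈ A, b ^ e ∧ n + ∑ e ∈ A, b ^ e < 3 * b ^ A.max' hA := by
  have hmem := A.max'_mem hA
  have hrest : ∑ e ∈ A.erase (A.max' hA), b ^ e < b ^ A.max' hA := Nat.geomSum_lt hb
    fun e he => lt_of_le_of_ne (A.le_max' e (mem_of_mem_erase he)) (ne_of_mem_erase he)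
  rw [← add_sum_erase A _ hmem]
  omega

end Digits

/-- The index set `Iₙ` of the construction, so that `levelSums` below is `⋃ₙ (Jₙ + n)`. -/
def levelExps (n : ℕ) : Set ℕ := Set.range (Nat.pair n)

theorem eq_of_mem_levelExps {m n e : ℕ} (hm : e ∈ levelExps m) (hn : e ∈ levelExps n) :
    m = n := by
  obtain ⟨i, rfl⟩ := hm
  obtain ⟨j, hj⟩ := hn
  exact (Nat.pair_eq_pair.1 hj).1.symm

theorem le_of_mem_levelExps {n e : ℕ} (h : e ∈ levelExps n) : n ≤ e := by
  obtain ⟨i, rfl⟩ := h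
  exact Nat.left_le_pair n i

def levelSums : Set ℕ :=
  {x | ∃ n, 0 < n ∧ ∃ A : Finset ℕ, A.Nonempty ∧ ↑A ⊆ levelExps n ∧ x = n + ∑ e ∈ A, 10 ^ e}

theorem levelSum_bounds {n : ℕ} {A : Finset ℕ} (hA : A.Nonempty) (hAn : ↑A ⊆ levelExps n) :
    10 ^ A.max' hA ≤ n + ∑ e ∈ A, 10 ^ e ∧ n + ∑ e ∈ A, 10 ^ e < 3 * 10 ^ A.max' hA :=
  pow_max'_le_add_sum_pow (by norm_num) hA <|
    (le_of_mem_levelExps (hAn (A.max'_mem hA))).trans_lt (Nat.lt_pow_self (by norm_num))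

theorem add_ne_of_subset_levelExps {x n : ℕ} (hx : x ∈ levelSums) {A B : Finset ℕ}
    (hA : ↑A ⊆ levelExps n) (hB : ↑B ⊆ levelExps n) :
    x + (n + ∑ e ∈ A, 10 ^ e) ≠ n + ∑ e ∈ B, 10 ^ e := by
  obtain ⟨m, hm, t, ht, htm, rfl⟩ := hx
  intro h
  rcases le_or_gt m n with hmn | hnm
  · have hlevel : ∀ {C : Finset ℕ}, ↑C ⊆ levelExps n → ∀ e ∈ C, m ≤ e :=
      fun hC e he => hmn.trans (le_of_mem_levelExps (hC he))
    have hsum := ((add_sum_pow_modEq m fun e he => le_of_mem_levelExps (htm he)).add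
      (add_sum_pow_modEq n (hlevel hA))).symm.trans (h ▸ add_sum_pow_modEq n (hlevel hB))
    have hdvd : 10 ^ m ∣ m :=
      Nat.modEq_zero_iff_dvd.1 (Nat.ModEq.add_right_cancel' n (by simpa using hsum.symm))
    exact (Nat.lt_pow_self (by norm_num)).not_ge (Nat.le_of_dvd hm hdvd)
  · obtain ⟨hxlow, hxhigh⟩ := levelSum_bounds ht htm
    set P := t.max' ht
    have hPn : ∀ {C : Finset ℕ}, ↑C ⊆ levelExps n → P ∉ C := fun hC hP =>
      hnm.ne' (eq_of_mem_levelExps (htm (t.max'_mem ht)) (hC hP))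
    have hAmod := sum_pow_mod_pow_succ_lt (b := 10) (by norm_num) (hPn hA)
    have hBmod := sum_pow_mod_pow_succ_lt (b := 10) (by norm_num) (hPn hB)
    have hxA : m + ∑ e ∈ t, 10 ^ e + ∑ e ∈ A, 10 ^ e = ∑ e ∈ B, 10 ^ e := by omega
    have hpow := pow_succ 10 P
    rw [← hxA, ← Nat.add_mod_mod, Nat.mod_eq_of_lt (by omega)] at hBmod
    omega

theorem levelSums_add_notMem : ∀ x ∈ levelSums, ∀ y ∈ levelSums, x + y ∉ levelSums := by
  intro x hx y hy
  wlog hxy : x ≤ y generalizing x y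
  · rw [add_comm]
    exact this y hy x hx (le_of_not_ge hxy)
  rintro ⟨k, -, B, hB, hBk, hz⟩
  obtain ⟨n, -, A, hA, hAn, rfl⟩ := hy
  obtain ⟨hylow, hyhigh⟩ := levelSum_bounds hA hAn
  obtain ⟨hzlow, hzhigh⟩ := levelSum_bounds hB hBk
  have hlog : Nat.log 10 (x + (n + ∑ e ∈ A, 10 ^ e)) = A.max' hA :=
    Nat.log_eq_of_pow_le_of_lt_pow (by omega) (by rw [pow_succ]; omega)
  have htop : A.max' hA = B.max' hB := by
    rw [← hlog, hz]
    exact Nat.log_eq_of_pow_le_of_lt_pow hzlow (by rw [pow_succ]; omega)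
  obtain rfl : n = k :=
    eq_of_mem_levelExps (hAn (A.max'_mem hA)) (htop ▸ hBk (B.max'_mem hB))
  exact add_ne_of_subset_levelExps hx hAn hBk hz

theorem isIPSet_levelSums_sub {n : ℕ} (hn : 0 < n) : IsIPSet {m : ℕ | m + n ∈ levelSums} := by
  refine ⟨fun i => 10 ^ Nat.pair n i, fun i j hij => ?_, by positivity, fun t ht => ?_⟩
  · exact Nat.pow_lt_pow_right (by norm_num) (Nat.pair_lt_pair_right n hij)
  · refine ⟨n, hn, t.image (Nat.pair n), ht.image _, ?_, ?_⟩
    · simp [levelExps]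
    · rw [sum_image fun i _ j _ h => (Nat.pair_eq_pair.1 h).2, add_comm]

/-- There is a set `F ⊆ ℕ` of positive integers such that every shift `F − n`
contains an IP-set, yet `F` is sum-free (`x, y ∈ F ⟹ x + y ∉ F`); in particular `F` is not
an IP-set. -/
theorem stmt16 :
    ∃ F : Set ℕ, (∀ x ∈ F, 0 < x) ∧
      (∀ n : ℕ, 0 < n → IsIPSet {m : ℕ | m + n ∈ F}) ∧
      (∀ x ∈ F, ∀ y ∈ F, x + y ∉ F) ∧
      ¬ IsIPSet F := by
  refine ⟨levelSums, ?_, fun n hn => isIPSet_levelSums_sub hn, levelSums_add_notMem,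
    not_isIPSet_of_add_notMem levelSums_add_notMem⟩
  rintro x ⟨n, hn, -, -, -, rfl⟩
  omega
end

section
/- Let J be the set of all finite sums of distinct powers 10^k with k ranging over an infinite set I ⊆ ℕ of integers ≥ n, let m, k, n ∈ ℕ with n, m, k ≥ 1, and suppose n₁ < … < n_s, m₁ < … < m_t, k₁ < … < k_u are positive integers with (10^{n₁}+…+10^{n_s}+n) + (10^{m₁}+…+10^{m_t}+m) = 10^{k₁}+…+10^{k_u}+k, where 1 ≤ n ≤ n₁, 1 ≤ m ≤ m₁, 1 ≤ k ≤ k₁, and {k₁,…,k_u} is disjoint from {n₁,…,n_s} ∪ {m₁,…,m_t}, with all of s,t,u ≥ 1. Then a contradiction follows; i.e., no such equality can hold. -/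
/-!
A sum of distinct powers `10 ^ e` with all `e < N` is below `10 ^ N / 9`, and a summand such as
`n ≤ n₁ < N` is below `10 ^ (N - 1)`; together they stay below `10 ^ N / 2`. Compare the largest
exponents: if some `nᵢ` or `mⱼ` exceeds every `kₗ`, the left side is at least `10 ^ nᵢ` while the
right side is below `10 ^ (k_u + 1) / 2`. Otherwise, by disjointness, `k_u` exceeds every `nᵢ` and
`mⱼ`, so both halves of the left side are below `10 ^ k_u / 2` while the right side is at least
`10 ^ k_u`.
-/

open Finset Function

lemma sum_pow_mul_lt_pow {ι : Type*} [Fintype ι] {f : ι → ℕ} (hf : Injective f) {N : ℕ}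
    (hfN : ∀ i, f i < N) (x : ℕ) : (∑ i, (x + 1) ^ f i) * x < (x + 1) ^ N := by
  have hsub : univ.map ⟨f, hf⟩ ⊆ range N := by
    intro j hj
    obtain ⟨i, -, rfl⟩ := mem_map.mp hj
    exact mem_range.mpr (hfN i)
  calc (∑ i, (x + 1) ^ f i) * x
      = (∑ j ∈ univ.map ⟨f, hf⟩, (x + 1) ^ j) * x := by rw [sum_map]; rfl
    _ ≤ (∑ j ∈ range N, (x + 1) ^ j) * x := Nat.mul_le_mul_right x (sum_le_sum_of_subset hsub)
    _ < (x + 1) ^ N := by rw [← geom_sum_mul_add]; exact Nat.lt_succ_self _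

lemma two_mul_sum_pow_ten_add_lt {ι : Type*} [Fintype ι] {f : ι → ℕ} (hf : Injective f)
    {N x : ℕ} (hfN : ∀ i, f i < N) (hx : x < N) : 2 * (∑ i, 10 ^ f i + x) < 10 ^ N := by
  have hsum := sum_pow_mul_lt_pow hf hfN 9
  obtain ⟨M, rfl⟩ : ∃ M, N = M + 1 := ⟨N - 1, by omega⟩
  have hxM : x < 10 ^ M := (Nat.le_of_lt_succ hx).trans_lt (Nat.lt_pow_self (by norm_num))
  rw [pow_succ] at hsum ⊢
  norm_num at hsum
  omega

lemma pow_le_sum_pow {ι : Type*} [Fintype ι] (f : ι → ℕ) (b : ℕ) (i : ι) :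
    b ^ f i ≤ ∑ j, b ^ f j :=
  single_le_sum (f := fun j ↦ b ^ f j) (fun _ _ ↦ Nat.zero_le _) (mem_univ i)

theorem stmt17_general (s t u : ℕ) (hs : 0 < s) (ht : 0 < t) (hu : 0 < u)
    (a : Fin s → ℕ) (b : Fin t → ℕ) (c : Fin u → ℕ)
    (ha : StrictMono a) (hb : StrictMono b) (hc : StrictMono c)
    (n m k : ℕ)
    (hna : n ≤ a ⟨0, hs⟩) (hmb : m ≤ b ⟨0, ht⟩) (hkc : k ≤ c ⟨0, hu⟩)
    (hdisj1 : ∀ (i : Fin u) (j : Fin s), c i ≠ a j)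
    (hdisj2 : ∀ (i : Fin u) (j : Fin t), c i ≠ b j)
    (heq : ((∑ i, 10 ^ a i) + n) + ((∑ i, 10 ^ b i) + m) = (∑ i, 10 ^ c i) + k) :
    False := by
  have : Nonempty (Fin s) := ⟨⟨0, hs⟩⟩
  have : Nonempty (Fin t) := ⟨⟨0, ht⟩⟩
  have : Nonempty (Fin u) := ⟨⟨0, hu⟩⟩
  obtain ⟨ia, hia⟩ := Finite.exists_max a
  obtain ⟨ib, hib⟩ := Finite.exists_max b
  obtain ⟨ic, hic⟩ := Finite.exists_max c
  have hc_small : 2 * (∑ i, 10 ^ c i + k) < 10 ^ (c ic + 1) :=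
    two_mul_sum_pow_ten_add_lt hc.injective (fun i ↦ Nat.lt_succ_of_le (hic i))
      (Nat.lt_succ_of_le (hkc.trans (hic _)))
  by_cases hCA : c ic < a ia
  · have hA_le := pow_le_sum_pow a 10 ia
    have hCA_pow := Nat.pow_le_pow_right (show 0 < 10 by norm_num) hCA
    omega
  by_cases hCB : c ic < b ib
  · have hB_le := pow_le_sum_pow b 10 ib
    have hCB_pow := Nat.pow_le_pow_right (show 0 < 10 by norm_num) hCB
    omega
  have hAC : a ia < c ic := lt_of_le_of_ne (not_lt.mp hCA) (hdisj1 ic ia).symm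
  have hBC : b ib < c ic := lt_of_le_of_ne (not_lt.mp hCB) (hdisj2 ic ib).symm
  have ha_small := two_mul_sum_pow_ten_add_lt ha.injective (fun i ↦ (hia i).trans_lt hAC)
    ((hna.trans (hia _)).trans_lt hAC)
  have hb_small := two_mul_sum_pow_ten_add_lt hb.injective (fun i ↦ (hib i).trans_lt hBC)
    ((hmb.trans (hib _)).trans_lt hBC)
  have hC_le := pow_le_sum_pow c 10 ic
  omega

/-- If `n₁ < … < n_s`, `m₁ < … < m_t`, `k₁ < … < k_u` are positive integers,
`1 ≤ n ≤ n₁`, `1 ≤ m ≤ m₁`, `1 ≤ k ≤ k₁`, `{k₁,…,k_u}` is disjoint from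
`{n₁,…,n_s} ∪ {m₁,…,m_t}`, and
`(10^{n₁}+…+10^{n_s}+n) + (10^{m₁}+…+10^{m_t}+m) = 10^{k₁}+…+10^{k_u}+k`,
then we reach a contradiction: no such equality can hold. -/
theorem stmt17 (s t u : ℕ) (hs : 0 < s) (ht : 0 < t) (hu : 0 < u)
    (a : Fin s → ℕ) (b : Fin t → ℕ) (c : Fin u → ℕ)
    (ha : StrictMono a) (hb : StrictMono b) (hc : StrictMono c)
    (ha1 : 1 ≤ a ⟨0, hs⟩) (hb1 : 1 ≤ b ⟨0, ht⟩) (hc1 : 1 ≤ c ⟨0, hu⟩)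
    (n m k : ℕ)
    (hn : 1 ≤ n) (hm : 1 ≤ m) (hk : 1 ≤ k)
    (hna : n ≤ a ⟨0, hs⟩) (hmb : m ≤ b ⟨0, ht⟩) (hkc : k ≤ c ⟨0, hu⟩)
    (hdisj1 : ∀ (i : Fin u) (j : Fin s), c i ≠ a j)
    (hdisj2 : ∀ (i : Fin u) (j : Fin t), c i ≠ b j)
    (heq : ((∑ i, 10 ^ a i) + n) + ((∑ i, 10 ^ b i) + m) = (∑ i, 10 ^ c i) + k) :
    False :=
  stmt17_general s t u hs ht hu a b c ha hb hc n m k hna hmb hkc hdisj1 hdisj2 heq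
end

section
/- Let C be a class of topological dynamical systems closed under subsystems and finite products. If S ⊆ ℕ is a weak interpolation set of order 2 for C, then S is a weak interpolation set of order 2^m for C for every m ∈ ℕ. (Hence weak interpolation of order 2 implies weak interpolation of all orders for C.) -/
/-- A topological dynamical system: a compact metric space with a continuous self-map. -/
structure TDS where
  X : Type
  ms : MetricSpace X
  cs : CompactSpace X
  T : X → X
  cont : Continuous T

attribute [instance] TDS.ms TDS.cs

/-- The product of two topological dynamical systems. -/
noncomputable def TDS.prod (A B : TDS) : TDS where
  X := A.X × B.X
  ms := inferInstance
  cs := inferInstance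
  T := fun p => (A.T p.1, B.T p.2)
  cont := (A.cont.comp continuous_fst).prodMk (B.cont.comp continuous_snd)

/-- The subsystem of a topological dynamical system given by a closed invariant subset. -/
noncomputable def TDS.sub (A : TDS) (Y : Set A.X) (hY : IsClosed Y)
    (hinv : Set.MapsTo A.T Y Y) : TDS where
  X := Y
  ms := inferInstance
  cs := isCompact_iff_compactSpace.mp hY.isCompact
  T := hinv.restrict A.T Y Y
  cont := A.cont.restrict hinv

/-- `S` is a weak interpolation set of order `k` for the class `C`: every `f : S → {0,…,k−1}`
extends to `n ↦ F(Tⁿx)` for some system in `C`, transitive point `x` and continuous `F`. -/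
def WeakInterp (C : TDS → Prop) (k : ℕ) (S : Set ℕ) : Prop :=
  ∀ f : ℕ → ℕ, (∀ n ∈ S, f n < k) →
    ∃ A : TDS, C A ∧ ∃ (x : A.X) (F : A.X → ℂ),
      Dense (Set.range fun n : ℕ => A.T^[n] x) ∧ Continuous F ∧
      ∀ n ∈ S, F (A.T^[n] x) = (f n : ℂ)

/-!
Digits interpolate separately: if `F` and `G` interpolate `f mod 2` and `f / 2` along orbits of
`x` and `y`, then `(p, q) ↦ F p + 2 G q` interpolates `f` along the orbit of `(x, y)` in the
product system, and restricting to the orbit closure of `(x, y)` makes that orbit dense.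
Iterating, order `2` gives order `2 ^ m`.
-/

open Set Function

namespace TDS

theorem iterate_prod_T (A B : TDS) (n : ℕ) :
    (A.prod B).T^[n] = Prod.map A.T^[n] B.T^[n] :=
  Prod.map_iterate A.T B.T n

theorem coe_iterate_sub_T (A : TDS) {Y : Set A.X} (hY : IsClosed Y) (hinv : MapsTo A.T Y Y)
    (p : (A.sub Y hY hinv).X) (n : ℕ) :
    Subtype.val ((A.sub Y hY hinv).T^[n] p) = A.T^[n] (Subtype.val p) :=
  hinv.coe_iterate_restrict p n

theorem mapsTo_closure_range_iterate (A : TDS) (x : A.X) :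
    MapsTo A.T (closure (range fun n : ℕ => A.T^[n] x))
      (closure (range fun n : ℕ => A.T^[n] x)) := by
  refine MapsTo.closure ?_ A.cont
  rintro _ ⟨n, rfl⟩
  exact ⟨n + 1, iterate_succ_apply' A.T n x⟩

noncomputable def orbitClosure (A : TDS) (x : A.X) : TDS :=
  A.sub _ isClosed_closure (A.mapsTo_closure_range_iterate x)

def orbitClosure.base (A : TDS) (x : A.X) : (A.orbitClosure x).X :=
  ⟨x, subset_closure ⟨0, rfl⟩⟩

theorem coe_iterate_orbitClosure_base (A : TDS) (x : A.X) (n : ℕ) :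
    Subtype.val ((A.orbitClosure x).T^[n] (orbitClosure.base A x)) = A.T^[n] x :=
  A.coe_iterate_sub_T _ _ _ n

theorem dense_range_iterate_orbitClosure_base (A : TDS) (x : A.X) :
    Dense (range fun n : ℕ => (A.orbitClosure x).T^[n] (orbitClosure.base A x)) := by
  refine Subtype.dense_iff.2 (closure_mono ?_)
  rintro _ ⟨n, rfl⟩
  exact ⟨_, ⟨n, rfl⟩, A.coe_iterate_orbitClosure_base x n⟩

end TDS

def Interpolable (C : TDS → Prop) (S : Set ℕ) (g : ℕ → ℂ) : Prop :=
  ∃ A : TDS, C A ∧ ∃ (x : A.X) (F : A.X → ℂ),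
    Dense (range fun n : ℕ => A.T^[n] x) ∧ Continuous F ∧ ∀ n ∈ S, F (A.T^[n] x) = g n

section Interpolation

variable {C : TDS → Prop} {S : Set ℕ}

theorem weakInterp_iff {k : ℕ} :
    WeakInterp C k S ↔ ∀ f : ℕ → ℕ, (∀ n ∈ S, f n < k) → Interpolable C S (fun n => f n) :=
  Iff.rfl

theorem Interpolable.of_orbit
    (Csub : ∀ (A : TDS), C A → ∀ (Y : Set A.X) (hY : IsClosed Y)
      (hinv : MapsTo A.T Y Y), C (A.sub Y hY hinv))
    {g : ℕ → ℂ} {A : TDS} (hA : C A) (x : A.X) {F : A.X → ℂ} (hF : Continuous F)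
    (hFg : ∀ n ∈ S, F (A.T^[n] x) = g n) : Interpolable C S g := by
  refine ⟨A.orbitClosure x, Csub A hA _ _ _, TDS.orbitClosure.base A x, fun p => F (Subtype.val p),
    A.dense_range_iterate_orbitClosure_base x, hF.comp continuous_subtype_val, fun n hn => ?_⟩
  exact (congrArg F (A.coe_iterate_orbitClosure_base x n)).trans (hFg n hn)

theorem Interpolable.map₂
    (Csub : ∀ (A : TDS), C A → ∀ (Y : Set A.X) (hY : IsClosed Y)
      (hinv : MapsTo A.T Y Y), C (A.sub Y hY hinv))
    (Cprod : ∀ A B : TDS, C A → C B → C (A.prod B))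
    {g h : ℕ → ℂ} (hg : Interpolable C S g) (hh : Interpolable C S h)
    {Φ : ℂ → ℂ → ℂ} (hΦ : Continuous (uncurry Φ)) :
    Interpolable C S (fun n => Φ (g n) (h n)) := by
  obtain ⟨A, hA, x, F, -, hF, hFg⟩ := hg
  obtain ⟨B, hB, y, G, -, hG, hGh⟩ := hh
  refine .of_orbit Csub (Cprod A B hA hB) (x, y) (F := fun p => Φ (F p.1) (G p.2))
    (hΦ.comp ((hF.comp continuous_fst).prodMk (hG.comp continuous_snd))) fun n hn => ?_
  simp only [TDS.iterate_prod_T, Prod.map_apply, hFg n hn, hGh n hn]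

theorem WeakInterp.mono {k l : ℕ} (hkl : k ≤ l) (hl : WeakInterp C l S) : WeakInterp C k S :=
  fun f hf => hl f fun n hn => (hf n hn).trans_le hkl

/-- Split `f < a * b` into its last base-`a` digit `f % a` and the rest `f / a`. -/
theorem WeakInterp.mul
    (Csub : ∀ (A : TDS), C A → ∀ (Y : Set A.X) (hY : IsClosed Y)
      (hinv : MapsTo A.T Y Y), C (A.sub Y hY hinv))
    (Cprod : ∀ A B : TDS, C A → C B → C (A.prod B))
    {a b : ℕ} (ha : WeakInterp C a S) (hb : WeakInterp C b S) : WeakInterp C (a * b) S := by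
  rcases Nat.eq_zero_or_pos a with rfl | ha_pos
  · simpa using ha
  rw [weakInterp_iff]
  intro f hf
  have hmod : Interpolable C S (fun n => (f n % a : ℕ)) :=
    ha _ fun n _ => Nat.mod_lt _ ha_pos
  have hdiv : Interpolable C S (fun n => (f n / a : ℕ)) :=
    hb _ fun n hn => Nat.div_lt_of_lt_mul (hf n hn)
  have hsum := hmod.map₂ Csub Cprod hdiv (Φ := fun u v => u + a * v) (by fun_prop)
  simpa only [← Nat.cast_mul, ← Nat.cast_add, Nat.mod_add_div] using hsum

end Interpolation

/-- If a class `C` of topological dynamical systems is closed under subsystems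
and finite products, then weak interpolation of order `2` for `C` implies weak interpolation
of order `2^m` for `C` for every `m` (hence weak interpolation of all orders). -/
theorem stmt18 (C : TDS → Prop)
    (Csub : ∀ (A : TDS), C A → ∀ (Y : Set A.X) (hY : IsClosed Y)
      (hinv : Set.MapsTo A.T Y Y), C (A.sub Y hY hinv))
    (Cprod : ∀ A B : TDS, C A → C B → C (A.prod B))
    (S : Set ℕ) (h2 : WeakInterp C 2 S) :
    ∀ m : ℕ, WeakInterp C (2 ^ m) S := by
  intro m
  induction m with
  | zero => exact h2.mono one_le_two
  | succ m ih => simpa only [pow_succ'] using h2.mul Csub Cprod ih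
end
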